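/- Let M be a τ-normal (para-CR) almost paracontact metric manifold whose characteristic form τ is a contact form and whose Reeb vector field equals the characteristic vector field ζ. Then the Pang invariants of the two Legendrian foliations determined by the ±1-eigendistributions of ψ satisfy Π₊(X⁺, Y⁺) = 2dτ(hX⁺, Y⁺) for sections X⁺, Y⁺ of V⁺ and Π₋(X⁻, Y⁻) = −2dτ(hX⁻, Y⁻) for sections X⁻, Y⁻ of V⁻; equivalently Π₊ = 2χ|_{V⁺} and Π₋ = 2χ|_{V⁻}, where χ(X,Y) = dτ(hX, ψY). -/
import Mathlib


noncomputable section

/-!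
An abstract model of smooth geometry: `F` plays the role of the algebra of
smooth real-valued functions on a manifold `M`, `V` plays the role of the
`C^∞(M)`-module of smooth vector fields on `M` (with its Lie bracket), and
`D X f` represents the directional derivative of the function `f` along the
vector field `X`.
-/
structure SmoothSetting (F V : Type*) [CommRing F] [Algebra ℝ F]
    [LieRing V] [Module F V] [Module ℝ V] [IsScalarTower ℝ F V] where
  D : V → F → F
  D_add : ∀ (X : V) (f g : F), D X (f + g) = D X f + D X g
  D_mul : ∀ (X : V) (f g : F), D X (f * g) = f * D X g + g * D X f
  D_addX : ∀ (X Y : V) (f : F), D (X + Y) f = D X f + D Y f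
  D_smulX : ∀ (f : F) (X : V) (k : F), D (f • X) k = f * D X k
  D_bracket : ∀ (X Y : V) (f : F), D ⁅X, Y⁆ f = D X (D Y f) - D Y (D X f)
  bracket_smul : ∀ (f : F) (X Y : V), ⁅X, f • Y⁆ = f • ⁅X, Y⁆ + D X f • Y

/-- An almost paracontact metric manifold, modelled abstractly: a quadruple
`(ψ, ζ, τ, g)` where `ψ` is a `(1,1)`-tensor field, `ζ` a vector field, `τ` a
one-form and `g` a pseudo-Riemannian metric, satisfying `ψ² = Id - τ ⊗ ζ`,
`τ(ζ) = 1` and `g(ψX, ψY) = -g(X,Y) + τ(X)τ(Y)` (together with the standard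
consequent identities `ψζ = 0`, `τ ∘ ψ = 0`), and the Levi-Civita connection
`nabla` of `g` (characterised by metricity and torsion-freeness). -/
structure APCMS (F V : Type*) [CommRing F] [Algebra ℝ F]
    [LieRing V] [Module F V] [Module ℝ V] [IsScalarTower ℝ F V]
    extends SmoothSetting F V where
  psi : V → V
  zeta : V
  tau : V → F
  g : V → V → F
  psi_add : ∀ X Y : V, psi (X + Y) = psi X + psi Y
  psi_smul : ∀ (f : F) (X : V), psi (f • X) = f • psi X
  tau_add : ∀ X Y : V, tau (X + Y) = tau X + tau Y
  tau_smul : ∀ (f : F) (X : V), tau (f • X) = f * tau X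
  g_addX : ∀ X Y Z : V, g (X + Y) Z = g X Z + g Y Z
  g_smulX : ∀ (f : F) (X Y : V), g (f • X) Y = f * g X Y
  g_symm : ∀ X Y : V, g X Y = g Y X
  g_nondeg : ∀ X : V, (∀ Y : V, g X Y = 0) → X = 0
  psi_psi : ∀ X : V, psi (psi X) = X - tau X • zeta
  tau_zeta : tau zeta = 1
  psi_zeta : psi zeta = 0
  tau_psi : ∀ X : V, tau (psi X) = 0
  g_psi_psi : ∀ X Y : V, g (psi X) (psi Y) = - g X Y + tau X * tau Y
  nabla : V → V → V
  nabla_addX : ∀ X Y Z : V, nabla (X + Y) Z = nabla X Z + nabla Y Z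
  nabla_smulX : ∀ (f : F) (X Y : V), nabla (f • X) Y = f • nabla X Y
  nabla_addY : ∀ X Y Z : V, nabla X (Y + Z) = nabla X Y + nabla X Z
  nabla_leibniz : ∀ (X : V) (f : F) (Y : V),
    nabla X (f • Y) = D X f • Y + f • nabla X Y
  nabla_torsion_free : ∀ X Y : V, nabla X Y - nabla Y X = ⁅X, Y⁆
  nabla_metric : ∀ X Y Z : V,
    D X (g Y Z) = g (nabla X Y) Z + g Y (nabla X Z)

namespace APCMS

variable {F V : Type*} [CommRing F] [Algebra ℝ F]
  [LieRing V] [Module F V] [Module ℝ V] [IsScalarTower ℝ F V]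
variable (A : APCMS F V)

/-- The fundamental form `Ψ(X,Y) = g(X, ψY)`. -/
def Psi2 (X Y : V) : F := A.g X (A.psi Y)

/-- The exterior derivative `dτ`, via the coboundary formula
`2 dτ(X,Y) = X τ(Y) - Y τ(X) - τ([X,Y])`. -/
def dTau (X Y : V) : F :=
  ((1:ℝ)/2) • (A.D X (A.tau Y) - A.D Y (A.tau X) - A.tau ⁅X, Y⁆)

/-- The exterior derivative `dΨ`, via the coboundary formula. -/
def dPsi (X Y Z : V) : F :=
  ((1:ℝ)/3) • (A.D X (A.Psi2 Y Z) + A.D Y (A.Psi2 Z X) + A.D Z (A.Psi2 X Y)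
    - A.Psi2 ⁅X, Y⁆ Z - A.Psi2 ⁅Y, Z⁆ X - A.Psi2 ⁅Z, X⁆ Y)

/-- The Lie derivative `(L_ζ τ)(X)`. -/
def lieTau (X : V) : F := A.D A.zeta (A.tau X) - A.tau ⁅A.zeta, X⁆

/-- The Lie derivative `(L_ζ ψ)(X)`. -/
def liePsi (X : V) : V := ⁅A.zeta, A.psi X⁆ - A.psi ⁅A.zeta, X⁆

/-- The tensor field `h = (1/2) L_ζ ψ`. -/
def h (X : V) : V := ((1:ℝ)/2) • A.liePsi X

/-- The Nijenhuis torsion `[ψ,ψ](X,Y)`. -/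
def nijPsi (X Y : V) : V :=
  A.psi (A.psi ⁅X, Y⁆) + ⁅A.psi X, A.psi Y⁆
    - A.psi ⁅A.psi X, Y⁆ - A.psi ⁅X, A.psi Y⁆

/-- The tensor `K⁽¹⁾(X,Y) = [ψ,ψ](X,Y) - 2 dτ(X,Y) ζ`. -/
def K1 (X Y : V) : V := A.nijPsi X Y - (2 * A.dTau X Y) • A.zeta

/-- The tensor `K⁽²⁾(X,Y) = (L_{ψX} τ)(Y) - (L_{ψY} τ)(X)`. -/
def K2 (X Y : V) : F :=
  (A.D (A.psi X) (A.tau Y) - A.tau ⁅A.psi X, Y⁆)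
    - (A.D (A.psi Y) (A.tau X) - A.tau ⁅A.psi Y, X⁆)

/-- The covariant derivative `(∇_X ψ)(Y)`. -/
def covPsi (X Y : V) : V := A.nabla X (A.psi Y) - A.psi (A.nabla X Y)

/-- `M` is `τ`-normal: `K⁽¹⁾(X,Y) = 0` whenever `τ(X) = τ(Y) = 0`. -/
def TauNormal : Prop := ∀ X Y : V, A.tau X = 0 → A.tau Y = 0 → A.K1 X Y = 0

/-- `M` is normal: `K⁽¹⁾ = 0` identically. -/
def Normal : Prop := ∀ X Y : V, A.K1 X Y = 0

/-- `X` is a section of the `+1`-eigendistribution `V⁺` of `ψ`. -/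
def Vp (X : V) : Prop := A.psi X = X

/-- `X` is a section of the `-1`-eigendistribution `V⁻` of `ψ`. -/
def Vm (X : V) : Prop := A.psi X = -X

/-- `M` is a para-CR manifold: both eigendistributions `V⁺`, `V⁻` of `ψ` are
involutive. -/
def ParaCR : Prop :=
  (∀ X Y : V, A.Vp X → A.Vp Y → A.Vp ⁅X, Y⁆) ∧
  (∀ X Y : V, A.Vm X → A.Vm Y → A.Vm ⁅X, Y⁆)

/-- The characteristic form `τ` is a contact form: `dτ` is nondegenerate on
the kernel distribution of `τ`. -/
def IsContact : Prop :=
  ∀ X : V, A.tau X = 0 → (∀ Y : V, A.dTau X Y = 0) → X = 0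

/-- The Reeb vector field of the contact form `τ` equals the characteristic
vector field `ζ` (i.e. `τ(ζ) = 1`, which holds by definition, and
`ι_ζ dτ = 0`). -/
def ReebEqZeta : Prop := ∀ X : V, A.dTau A.zeta X = 0

/-- The Pang invariant `Π(X,Y) = (L_X L_Y τ)(ζ) = -τ([[ζ,X],Y])`; restricted
to sections of `V⁺` (resp. `V⁻`) it is the Pang invariant `Π₊` (resp. `Π₋`)
of the Legendrian foliation determined by `V⁺` (resp. `V⁻`). -/
def Pang (X Y : V) : F := - A.tau ⁅⁅A.zeta, X⁆, Y⁆

/-- The tensor field `χ(X,Y) = dτ(hX, ψY)`. -/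
def chi (X Y : V) : F := A.dTau (A.h X) (A.psi Y)

/-- `Dc` is a linear connection on `M`. -/
def IsConnection (Dc : V → V → V) : Prop :=
  (∀ X Y Z : V, Dc (X + Y) Z = Dc X Z + Dc Y Z) ∧
  (∀ (f : F) (X Y : V), Dc (f • X) Y = f • Dc X Y) ∧
  (∀ X Y Z : V, Dc X (Y + Z) = Dc X Y + Dc X Z) ∧
  (∀ (X : V) (f : F) (Y : V), Dc X (f • Y) = A.D X f • Y + f • Dc X Y)

/-- `Dc` is a parallelization: a linear connection making the whole almost
paracontact metric structure parallel: `∇̃ψ = 0`, `∇̃ζ = 0`, `∇̃τ = 0`,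
`∇̃g = 0`. -/
def IsParallelization (Dc : V → V → V) : Prop :=
  A.IsConnection Dc ∧
  (∀ X Y : V, Dc X (A.psi Y) = A.psi (Dc X Y)) ∧
  (∀ X : V, Dc X A.zeta = 0) ∧
  (∀ X Y : V, A.D X (A.tau Y) = A.tau (Dc X Y)) ∧
  (∀ X Y Z : V, A.D X (A.g Y Z) = A.g (Dc X Y) Z + A.g Y (Dc X Z))

/-! ### Auxiliary lemmas -/

section Aux

variable {F V : Type*} [CommRing F] [Algebra ℝ F]
  [LieRing V] [Module F V] [Module ℝ V] [IsScalarTower ℝ F V]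
variable (A : APCMS F V)

lemma lie_swap (a b : V) : ⁅a, b⁆ = -⁅b, a⁆ := by
  rw [← lie_skew a b]

lemma half2F (x : F) : ((1:ℝ)/2) • (x + x) = x := by
  rw [← two_smul ℝ, smul_smul]
  norm_num

lemma half2V (v : V) : ((1:ℝ)/2) • (v + v) = v := by
  rw [← two_smul ℝ, smul_smul]
  norm_num

lemma two_mul_half (x : F) : (2:F) * (((1:ℝ)/2) • x) = x := by
  rw [mul_smul_comm, two_mul, half2F]

lemma halfF_mul (x : F) : algebraMap ℝ F ((1:ℝ)/2) * (x + x) = x := by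
  rw [← Algebra.smul_def, half2F]

lemma half_smul_eq_zero {x : F} (h : ((1:ℝ)/2) • x = 0) : x = 0 := by
  have h2 := congrArg (fun y => (2:ℝ) • y) h
  simp only [smul_smul, smul_zero] at h2
  norm_num at h2
  exact h2

lemma D_zero' (X : V) : A.D X 0 = 0 := by
  have h : A.D X 0 = A.D X 0 + A.D X 0 := by
    simpa using (A.D_add X 0 0).symm
  exact (left_eq_add.mp h)

lemma D_one' (X : V) : A.D X 1 = 0 := by
  have h : A.D X 1 = A.D X 1 + A.D X 1 := by
    have := A.D_mul X 1 1
    simpa using this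
  exact (left_eq_add.mp h)

lemma tau_zero' : A.tau (0 : V) = 0 := by
  have h : A.tau 0 = A.tau 0 + A.tau 0 := by
    simpa using (A.tau_add 0 0).symm
  exact (left_eq_add.mp h)

lemma tau_neg (X : V) : A.tau (-X) = - A.tau X := by
  have h : A.tau X + A.tau (-X) = 0 := by
    rw [← A.tau_add, add_neg_cancel, A.tau_zero']
  exact eq_neg_of_add_eq_zero_right h

lemma tau_sub (X Y : V) : A.tau (X - Y) = A.tau X - A.tau Y := by
  rw [sub_eq_add_neg, A.tau_add, A.tau_neg, sub_eq_add_neg]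

lemma psi_zero' : A.psi (0 : V) = 0 := by
  have h : A.psi 0 = A.psi 0 + A.psi 0 := by
    simpa using (A.psi_add 0 0).symm
  exact (left_eq_add.mp h)

lemma psi_neg (X : V) : A.psi (-X) = - A.psi X := by
  have h : A.psi X + A.psi (-X) = 0 := by
    rw [← A.psi_add, add_neg_cancel, A.psi_zero']
  exact eq_neg_of_add_eq_zero_right h

lemma psi_sub (X Y : V) : A.psi (X - Y) = A.psi X - A.psi Y := by
  rw [sub_eq_add_neg, A.psi_add, A.psi_neg, sub_eq_add_neg]

open APCMS in
lemma dTau_horiz (X Y : V) (hX : A.tau X = 0) (hY : A.tau Y = 0) :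
    A.dTau X Y = ((1:ℝ)/2) • (- A.tau ⁅X, Y⁆) := by
  simp only [APCMS.dTau, hX, hY, A.D_zero', sub_zero, zero_sub]

lemma tau_bracket_zeta (hR : A.ReebEqZeta) (X : V) (hX : A.tau X = 0) :
    A.tau ⁅A.zeta, X⁆ = 0 := by
  have h := hR X
  simp only [APCMS.dTau, hX, A.tau_zeta, A.D_zero', A.D_one', sub_zero,
    zero_sub] at h
  exact neg_eq_zero.mp (half_smul_eq_zero h)

lemma tau_vp (X : V) (hX : A.psi X = X) : A.tau X = 0 := by
  have h := A.tau_psi X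
  rwa [hX] at h

lemma tau_vm (X : V) (hX : A.psi X = -X) : A.tau X = 0 := by
  have h := A.tau_psi X
  rw [hX, A.tau_neg, neg_eq_zero] at h
  exact h

lemma vp_bracket (hN : A.TauNormal) (X Y : V)
    (hX : A.psi X = X) (hY : A.psi Y = Y) : A.psi ⁅X, Y⁆ = ⁅X, Y⁆ := by
  have hτX : A.tau X = 0 := A.tau_vp X hX
  have hτY : A.tau Y = 0 := A.tau_vp Y hY
  have hK := hN X Y hτX hτY
  have hdt : (2:F) * A.dTau X Y = - A.tau ⁅X, Y⁆ := by
    rw [A.dTau_horiz X Y hτX hτY, two_mul_half]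
  simp only [APCMS.K1, APCMS.nijPsi] at hK
  rw [hX, hY, A.psi_psi, hdt, neg_smul] at hK
  have h4 : (⁅X, Y⁆ - A.psi ⁅X, Y⁆) + (⁅X, Y⁆ - A.psi ⁅X, Y⁆) = 0 := by
    rw [← hK]; abel
  have h5 : ⁅X, Y⁆ - A.psi ⁅X, Y⁆ = 0 := by
    rw [← half2V (⁅X, Y⁆ - A.psi ⁅X, Y⁆), h4, smul_zero]
  exact (sub_eq_zero.mp h5).symm

lemma vm_bracket (hN : A.TauNormal) (X Y : V)
    (hX : A.psi X = -X) (hY : A.psi Y = -Y) : A.psi ⁅X, Y⁆ = -⁅X, Y⁆ := by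
  have hτX : A.tau X = 0 := A.tau_vm X hX
  have hτY : A.tau Y = 0 := A.tau_vm Y hY
  have hK := hN X Y hτX hτY
  have hdt : (2:F) * A.dTau X Y = - A.tau ⁅X, Y⁆ := by
    rw [A.dTau_horiz X Y hτX hτY, two_mul_half]
  simp only [APCMS.K1, APCMS.nijPsi] at hK
  rw [hX, hY, A.psi_psi] at hK
  simp only [neg_lie, lie_neg, neg_neg, A.psi_neg] at hK
  rw [hdt, neg_smul] at hK
  have h4 : (⁅X, Y⁆ + A.psi ⁅X, Y⁆) + (⁅X, Y⁆ + A.psi ⁅X, Y⁆) = 0 := by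
    rw [← hK]; abel
  have h5 : ⁅X, Y⁆ + A.psi ⁅X, Y⁆ = 0 := by
    rw [← half2V (⁅X, Y⁆ + A.psi ⁅X, Y⁆), h4, smul_zero]
  exact eq_neg_of_add_eq_zero_right h5

lemma vp_tau_bracket (hN : A.TauNormal) (X Y : V)
    (hX : A.psi X = X) (hY : A.psi Y = Y) : A.tau ⁅X, Y⁆ = 0 := by
  have h := A.tau_psi ⁅X, Y⁆
  rwa [A.vp_bracket hN X Y hX hY] at h

lemma vm_tau_bracket (hN : A.TauNormal) (X Y : V)
    (hX : A.psi X = -X) (hY : A.psi Y = -Y) : A.tau ⁅X, Y⁆ = 0 := by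
  have h := A.tau_psi ⁅X, Y⁆
  rw [A.vm_bracket hN X Y hX hY, A.tau_neg, neg_eq_zero] at h
  exact h

lemma tau_liePsi (hR : A.ReebEqZeta) (X : V) : A.tau (A.liePsi X) = 0 := by
  simp only [APCMS.liePsi]
  rw [A.tau_sub, A.tau_psi, sub_zero]
  exact A.tau_bracket_zeta hR (A.psi X) (A.tau_psi X)

lemma dTau_h (hR : A.ReebEqZeta) (X Z : V) (hτZ : A.tau Z = 0) :
    2 * A.dTau (A.h X) Z
      = -(algebraMap ℝ F ((1:ℝ)/2) * A.tau ⁅A.liePsi X, Z⁆) := by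
  have hτL : A.tau (A.liePsi X) = 0 := A.tau_liePsi hR X
  have hτh : A.tau (A.h X) = 0 := by
    rw [APCMS.h, ← algebraMap_smul F ((1:ℝ)/2) (A.liePsi X), A.tau_smul, hτL,
      mul_zero]
  have hbr : A.tau ⁅A.h X, Z⁆
      = algebraMap ℝ F ((1:ℝ)/2) * A.tau ⁅A.liePsi X, Z⁆ := by
    rw [APCMS.h, ← algebraMap_smul F ((1:ℝ)/2) (A.liePsi X),
      lie_swap ((algebraMap ℝ F ((1:ℝ)/2)) • A.liePsi X) Z,
      A.bracket_smul, A.tau_neg, A.tau_add, A.tau_smul, A.tau_smul, hτL,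
      mul_zero, add_zero, lie_swap Z (A.liePsi X), A.tau_neg, mul_neg,
      neg_neg]
  simp only [APCMS.dTau]
  rw [hτZ, hτh, A.D_zero', A.D_zero', hbr, sub_zero, zero_sub]
  exact two_mul_half _

end Aux

end APCMS

/-- Let `M` be a `τ`-normal (para-CR) almost paracontact metric
manifold whose characteristic form `τ` is a contact form and whose Reeb vector
field equals `ζ`. Then the Pang invariants of the two Legendrian foliations
determined by the `±1`-eigendistributions of `ψ` satisfy
`Π₊(X⁺, Y⁺) = 2dτ(hX⁺, Y⁺)` on sections of `V⁺` and
`Π₋(X⁻, Y⁻) = -2dτ(hX⁻, Y⁻)` on sections of `V⁻`; equivalently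
`Π₊ = 2χ|_{V⁺}` and `Π₋ = 2χ|_{V⁻}`, where `χ(X,Y) = dτ(hX, ψY)`. -/
theorem pang_invariants_formula
    {F V : Type*} [CommRing F] [Algebra ℝ F]
    [LieRing V] [Module F V] [Module ℝ V] [IsScalarTower ℝ F V]
    (A : APCMS F V) (hN : A.TauNormal) (hc : A.IsContact)
    (hR : A.ReebEqZeta) :
    (∀ X Y : V, A.Vp X → A.Vp Y →
      A.Pang X Y = 2 * A.dTau (A.h X) Y ∧ A.Pang X Y = 2 * A.chi X Y) ∧
    (∀ X Y : V, A.Vm X → A.Vm Y →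
      A.Pang X Y = -(2 * A.dTau (A.h X) Y) ∧ A.Pang X Y = 2 * A.chi X Y) := by
  constructor
  · intro X Y hX hY
    have hX' : A.psi X = X := hX
    have hY' : A.psi Y = Y := hY
    have hτX : A.tau X = 0 := A.tau_vp X hX'
    have hτY : A.tau Y = 0 := A.tau_vp Y hY'
    have hτZ : A.tau ⁅A.zeta, X⁆ = 0 := A.tau_bracket_zeta hR X hτX
    -- S := ⁅ζ,X⁆ + ψ⁅ζ,X⁆ is a section of V⁺
    have hS : A.psi (⁅A.zeta, X⁆ + A.psi ⁅A.zeta, X⁆)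
        = ⁅A.zeta, X⁆ + A.psi ⁅A.zeta, X⁆ := by
      rw [A.psi_add, A.psi_psi, hτZ, zero_smul, sub_zero, add_comm]
    have hkey : A.tau ⁅A.psi ⁅A.zeta, X⁆, Y⁆ = - A.tau ⁅⁅A.zeta, X⁆, Y⁆ := by
      have h0 := A.vp_tau_bracket hN _ Y hS hY'
      rw [add_lie, A.tau_add] at h0
      exact eq_neg_of_add_eq_zero_right h0
    have hL : A.liePsi X = ⁅A.zeta, X⁆ - A.psi ⁅A.zeta, X⁆ := by
      rw [APCMS.liePsi, hX']
    have hD := A.dTau_h hR X Y hτY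
    rw [hL, sub_lie, A.tau_sub, hkey, sub_neg_eq_add, APCMS.halfF_mul] at hD
    have hpang : A.Pang X Y = 2 * A.dTau (A.h X) Y := by
      rw [APCMS.Pang, hD]
    refine ⟨hpang, ?_⟩
    have hchi : A.chi X Y = A.dTau (A.h X) Y := by
      rw [APCMS.chi, hY']
    rw [hchi]
    exact hpang
  · intro X Y hX hY
    have hX' : A.psi X = -X := hX
    have hY' : A.psi Y = -Y := hY
    have hτX : A.tau X = 0 := A.tau_vm X hX'
    have hτY : A.tau Y = 0 := A.tau_vm Y hY'
    have hτZ : A.tau ⁅A.zeta, X⁆ = 0 := A.tau_bracket_zeta hR X hτX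
    -- S := ⁅ζ,X⁆ - ψ⁅ζ,X⁆ is a section of V⁻
    have hS : A.psi (⁅A.zeta, X⁆ - A.psi ⁅A.zeta, X⁆)
        = -(⁅A.zeta, X⁆ - A.psi ⁅A.zeta, X⁆) := by
      rw [A.psi_sub, A.psi_psi, hτZ, zero_smul, sub_zero, neg_sub]
    have hkey : A.tau ⁅A.psi ⁅A.zeta, X⁆, Y⁆ = A.tau ⁅⁅A.zeta, X⁆, Y⁆ := by
      have h0 := A.vm_tau_bracket hN _ Y hS hY'
      rw [sub_lie, A.tau_sub, sub_eq_zero] at h0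
      exact h0.symm
    have hL : A.liePsi X = -⁅A.zeta, X⁆ - A.psi ⁅A.zeta, X⁆ := by
      rw [APCMS.liePsi, hX', lie_neg]
    have htL : A.tau ⁅A.liePsi X, Y⁆
        = -(A.tau ⁅⁅A.zeta, X⁆, Y⁆ + A.tau ⁅⁅A.zeta, X⁆, Y⁆) := by
      rw [hL, sub_lie, neg_lie, A.tau_sub, A.tau_neg, hkey]
      ring
    have hD := A.dTau_h hR X Y hτY
    rw [htL, mul_neg, neg_neg, APCMS.halfF_mul] at hD
    have hpang : A.Pang X Y = -(2 * A.dTau (A.h X) Y) := by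
      rw [APCMS.Pang, hD]
    refine ⟨hpang, ?_⟩
    -- the χ-part: ψY = -Y
    have hτY' : A.tau (-Y) = 0 := by rw [A.tau_neg, hτY, neg_zero]
    have hD2 := A.dTau_h hR X (-Y) hτY'
    rw [lie_neg, A.tau_neg, htL, neg_neg, APCMS.halfF_mul] at hD2
    have hchi : A.chi X Y = A.dTau (A.h X) (-Y) := by
      rw [APCMS.chi, hY']
    rw [hchi, hD2, APCMS.Pang]
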